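/- Let S = {(p_i, |ψ_i⟩)}_{i=1}^N be states in ℂ^{d₁}⊗ℂ^{d₂} with squared largest Schmidt coefficients λ_i, ordered so that p₁λ₁ ≥ ... ≥ p_Nλ_N. Let r be the positive integer with κ := Σ_{i=1}^{r-1} λ_i^{-1} ≤ d₁d₂ < Σ_{i=1}^{r} λ_i^{-1}. Then for any separable measurement M, the success probability satisfies P_s(M) ≤ Σ_{i=1}^{r-1} p_i + p_r λ_r (d₁d₂ − κ). -/

import Mathlib

open Matrix
open scoped BigOperators ComplexOrder

noncomputable section

/-- Product vector `|a⟩⊗|b⟩` in `ℂ^{d₁} ⊗ ℂ^{d₂}`. -/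
def prodv {d₁ d₂ : ℕ} (a : Fin d₁ → ℂ) (b : Fin d₂ → ℂ) : Fin d₁ × Fin d₂ → ℂ :=
  fun y => a y.1 * b y.2

/-!
Group the outcomes `a` by the state `G a` they are decoded to, and let `tᵢ` and `μᵢ` be the total
`m_a |⟨ψᵢ|χ_a⟩|²` and `m_a ‖χ_a‖²` of the outcomes decoded to `i`. Sandwiching the POVM
identity between `ψᵢ` gives `tᵢ ≤ 1`, its trace gives `∑ μᵢ = d₁d₂`, and the Schmidt bound for
product vectors gives `tᵢ ≤ λᵢ μᵢ`. Maximising `∑ pᵢ tᵢ` under these constraints is a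
water-filling problem: as `pᵢλᵢ` decreases, filling `tᵢ = 1` for `i < r` costs mass `λᵢ⁻¹` each,
and all remaining mass earns at most `p_r λ_r` per unit.
-/

open Finset

section QuadraticForm

variable {κ : Type*} [Fintype κ]

lemma star_dotProduct_self_eq_sum_norm_sq (u : κ → ℂ) :
    star u ⬝ᵥ u = ((∑ y, ‖u y‖ ^ 2 : ℝ) : ℂ) := by
  push_cast
  simp only [dotProduct, Pi.star_apply, RCLike.star_def, Complex.conj_mul']

lemma star_dotProduct_vecMulVec_mulVec (v u : κ → ℂ) :
    star v ⬝ᵥ vecMulVec u (star u) *ᵥ v = ((‖star v ⬝ᵥ u‖ ^ 2 : ℝ) : ℂ) := by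
  rw [vecMulVec_mulVec, op_smul_eq_smul, dotProduct_smul, smul_eq_mul, star_dotProduct u v]
  push_cast
  exact Complex.conj_mul' _

end QuadraticForm

section RankOnePOVM

variable {ι κ : Type*} [Fintype ι] [Fintype κ] [DecidableEq κ] {m : ι → ℝ} {u : ι → κ → ℂ}

lemma sum_mul_norm_sq_star_dotProduct_eq_one
    (hM : ∑ a, (m a : ℂ) • vecMulVec (u a) (star (u a)) = 1) {v : κ → ℂ}
    (hv : star v ⬝ᵥ v = 1) :
    ∑ a, m a * ‖star v ⬝ᵥ u a‖ ^ 2 = 1 := by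
  have h := congrArg (fun M => star v ⬝ᵥ M *ᵥ v) hM
  simp only [sum_mulVec, dotProduct_sum, smul_mulVec, dotProduct_smul,
    star_dotProduct_vecMulVec_mulVec, one_mulVec, hv, smul_eq_mul] at h
  exact_mod_cast h

lemma sum_mul_sum_norm_sq_eq_card
    (hM : ∑ a, (m a : ℂ) • vecMulVec (u a) (star (u a)) = 1) :
    ∑ a, m a * ∑ y, ‖u a y‖ ^ 2 = Fintype.card κ := by
  have h := congrArg trace hM
  simp only [trace_sum, trace_smul, trace_vecMulVec, trace_one, smul_eq_mul,
    dotProduct_comm (u _) (star (u _)), star_dotProduct_self_eq_sum_norm_sq] at h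
  exact_mod_cast h

end RankOnePOVM

lemma exists_unit_smul_of_ne_zero {κ : Type*} [Fintype κ] {v : κ → ℂ} (hv : v ≠ 0) :
    ∃ (s : ℝ) (a : κ → ℂ), s ^ 2 = ∑ y, ‖v y‖ ^ 2 ∧ star a ⬝ᵥ a = 1 ∧ v = (s : ℂ) • a := by
  set n := ∑ y, ‖v y‖ ^ 2
  have hn : 0 < n := by
    obtain ⟨y, hy⟩ := Function.ne_iff.mp hv
    exact sum_pos' (fun y _ => by positivity) ⟨y, mem_univ y, pow_pos (norm_pos_iff.mpr hy) 2⟩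
  have hs : ((√n : ℝ) : ℂ) ≠ 0 := by exact_mod_cast (Real.sqrt_pos.mpr hn).ne'
  refine ⟨√n, ((√n : ℝ) : ℂ)⁻¹ • v, Real.sq_sqrt hn.le, ?_,
    by rw [smul_smul, mul_inv_cancel₀ hs, one_smul]⟩
  rw [star_smul, smul_dotProduct, dotProduct_smul, star_dotProduct_self_eq_sum_norm_sq, smul_eq_mul,
    smul_eq_mul, star_inv₀, Complex.star_def, Complex.conj_ofReal, ← mul_assoc, ← mul_inv,
    ← Complex.ofReal_mul, Real.mul_self_sqrt hn.le]
  exact inv_mul_cancel₀ (by exact_mod_cast hn.ne')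

section ProductVector

variable {d₁ d₂ : ℕ}

lemma prodv_smul_smul (c c' : ℂ) (a : Fin d₁ → ℂ) (b : Fin d₂ → ℂ) :
    prodv (c • a) (c' • b) = (c * c') • prodv a b := by
  funext y
  simp only [prodv, Pi.smul_apply, smul_eq_mul]
  ring

@[simp]
lemma prodv_zero_left (b : Fin d₂ → ℂ) : prodv (0 : Fin d₁ → ℂ) b = 0 := by
  funext y; simp [prodv]

@[simp]
lemma prodv_zero_right (a : Fin d₁ → ℂ) : prodv a (0 : Fin d₂ → ℂ) = 0 := by
  funext y; simp [prodv]

lemma sum_norm_sq_prodv (a : Fin d₁ → ℂ) (b : Fin d₂ → ℂ) :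
    ∑ y, ‖prodv a b y‖ ^ 2 = (∑ i, ‖a i‖ ^ 2) * ∑ j, ‖b j‖ ^ 2 := by
  simp only [prodv, norm_mul, mul_pow, Fintype.sum_prod_type, sum_mul_sum]

lemma norm_sq_star_dotProduct_prodv_le {ψ : Fin d₁ × Fin d₂ → ℂ} {lam : ℝ}
    (hlam : ∀ a b, star a ⬝ᵥ a = 1 → star b ⬝ᵥ b = 1 → ‖star ψ ⬝ᵥ prodv a b‖ ^ 2 ≤ lam)
    (x : Fin d₁ → ℂ) (y : Fin d₂ → ℂ) :
    ‖star ψ ⬝ᵥ prodv x y‖ ^ 2 ≤ lam * ∑ z, ‖prodv x y z‖ ^ 2 := by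
  rcases eq_or_ne x 0 with rfl | hx
  · simp
  rcases eq_or_ne y 0 with rfl | hy
  · simp
  obtain ⟨s, a, hs, ha, rfl⟩ := exists_unit_smul_of_ne_zero hx
  obtain ⟨t, b, ht, hb, rfl⟩ := exists_unit_smul_of_ne_zero hy
  rw [sum_norm_sq_prodv, ← hs, ← ht, prodv_smul_smul, dotProduct_smul, smul_eq_mul, norm_mul,
    mul_pow, ← Complex.ofReal_mul, Complex.norm_real, Real.norm_eq_abs, sq_abs]
  nlinarith [hlam a b ha hb, sq_nonneg (s * t)]

end ProductVector

lemma exists_sum_mul_sup'_eq_sum_mul_sum_fiber {ι J : Type*} [Fintype ι] [Fintype J]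
    [DecidableEq J] (h : (univ : Finset J).Nonempty) (m : ι → ℝ) (p : J → ℝ)
    (c : ι → J → ℝ) :
    ∃ G : ι → J, ∑ a, m a * univ.sup' h (fun i => p i * c a i) =
      ∑ i, p i * ∑ a ∈ univ.filter (G · = i), m a * c a i := by
  choose G _ hG using fun a => exists_mem_eq_sup' h (fun i => p i * c a i)
  refine ⟨G, ?_⟩
  simp_rw [hG, mul_sum]
  rw [← sum_fiberwise univ G]
  refine sum_congr rfl fun i _ => sum_congr rfl fun a ha => ?_
  rw [(mem_filter.mp ha).2]
  ring

section WaterFilling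

variable {ι : Type*} [LinearOrder ι] {p lam : ι → ℝ}

lemma mul_le_waterfilling_term (hp : ∀ i, 0 ≤ p i) (hlam : ∀ i, 0 < lam i)
    (hord : Antitone fun i => p i * lam i) {r i : ι} {t μ : ℝ} (ht : t ≤ 1)
    (htμ : t ≤ lam i * μ) (hμ : 0 ≤ μ) :
    p i * t ≤ (if i < r then p i else 0) + p r * lam r * (μ - if i < r then (lam i)⁻¹ else 0) := by
  have hpt : p i * t ≤ p i * lam i * μ := by
    rw [mul_assoc]; exact mul_le_mul_of_nonneg_left htμ (hp i)
  split_ifs with hi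
  · rcases le_or_gt (lam i)⁻¹ μ with hμi | hμi
    · nlinarith [mul_le_mul_of_nonneg_left ht (hp i), mul_nonneg (hp r) (hlam r).le]
    · calc p i * t ≤ p i + p i * lam i * (μ - (lam i)⁻¹) := by
            rw [mul_sub, mul_inv_cancel_right₀ (hlam i).ne']; linarith
        _ ≤ p i + p r * lam r * (μ - (lam i)⁻¹) :=
            (add_le_add_iff_left _).mpr
              (mul_le_mul_of_nonpos_right (hord hi.le) (sub_nonpos.mpr hμi.le))
  · rw [zero_add, sub_zero]
    exact hpt.trans (mul_le_mul_of_nonneg_right (hord (not_lt.mp hi)) hμ)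

lemma sum_mul_le_waterfilling [Fintype ι] (hp : ∀ i, 0 ≤ p i) (hlam : ∀ i, 0 < lam i)
    (hord : Antitone fun i => p i * lam i) {t μ : ι → ℝ} (ht : ∀ i, t i ≤ 1)
    (htμ : ∀ i, t i ≤ lam i * μ i) (hμ : ∀ i, 0 ≤ μ i) (r : ι) :
    ∑ i, p i * t i ≤ ∑ i ∈ univ.filter (· < r), p i +
      p r * lam r * (∑ i, μ i - ∑ i ∈ univ.filter (· < r), (lam i)⁻¹) := by
  calc ∑ i, p i * t i
      ≤ ∑ i, ((if i < r then p i else 0) +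
          p r * lam r * (μ i - if i < r then (lam i)⁻¹ else 0)) :=
        sum_le_sum fun i _ => mul_le_waterfilling_term hp hlam hord (ht i) (htμ i) (hμ i)
    _ = _ := by
        rw [sum_add_distrib, ← mul_sum, sum_sub_distrib, sum_filter, sum_filter]

end WaterFilling

theorem stmt10_general (d₁ d₂ N : ℕ)
    (ψ : Fin N → (Fin d₁ × Fin d₂ → ℂ)) (hψ : ∀ i, star (ψ i) ⬝ᵥ ψ i = 1)
    (p : Fin N → ℝ) (hp : ∀ i, 0 ≤ p i)
    (lam : Fin N → ℝ) (hlampos : ∀ i, 0 < lam i)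
    (hlam : ∀ i, IsGreatest {x : ℝ | ∃ (a : Fin d₁ → ℂ) (b : Fin d₂ → ℂ),
        star a ⬝ᵥ a = 1 ∧ star b ⬝ᵥ b = 1 ∧
        x = ‖star (ψ i) ⬝ᵥ prodv a b‖^2} (lam i))
    (hord : ∀ i j : Fin N, i ≤ j → p j * lam j ≤ p i * lam i)
    (r : Fin N)
    (A : ℕ) (m : Fin A → ℝ) (χ₁ : Fin A → Fin d₁ → ℂ) (χ₂ : Fin A → Fin d₂ → ℂ)
    (hm : ∀ a, 0 < m a)
    (hpovm : ∑ a, (m a : ℂ) • Matrix.vecMulVec (prodv (χ₁ a) (χ₂ a))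
        (star (prodv (χ₁ a) (χ₂ a))) = 1) :
    ∑ a, m a * (Finset.univ.sup' (Finset.univ_nonempty_iff.mpr ⟨r⟩)
        fun i => p i * ‖star (ψ i) ⬝ᵥ prodv (χ₁ a) (χ₂ a)‖^2) ≤
      (∑ i ∈ Finset.univ.filter (fun i => i < r), p i) +
        p r * lam r * ((d₁ : ℝ) * d₂ -
          ∑ i ∈ Finset.univ.filter (fun i => i < r), (lam i)⁻¹) := by
  set u : Fin A → Fin d₁ × Fin d₂ → ℂ := fun a => prodv (χ₁ a) (χ₂ a)
  obtain ⟨G, hG⟩ := exists_sum_mul_sup'_eq_sum_mul_sum_fiber (univ_nonempty_iff.mpr ⟨r⟩) m p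
    fun a i => ‖star (ψ i) ⬝ᵥ u a‖ ^ 2
  have hmass : ∑ i, ∑ a ∈ univ.filter (G · = i), m a * ∑ y, ‖u a y‖ ^ 2 = (d₁ : ℝ) * d₂ := by
    rw [sum_fiberwise, sum_mul_sum_norm_sq_eq_card hpovm]
    simp
  rw [hG, ← hmass]
  refine sum_mul_le_waterfilling hp hlampos (fun i j hij => hord i j hij) (fun i => ?_)
    (fun i => ?_) (fun i => sum_nonneg fun a _ => mul_nonneg (hm a).le (by positivity)) r
  · refine (sum_le_sum_of_subset_of_nonneg (filter_subset _ _) fun a _ _ => ?_).trans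
      (sum_mul_norm_sq_star_dotProduct_eq_one hpovm (hψ i)).le
    exact mul_nonneg (hm a).le (sq_nonneg _)
  · rw [mul_sum]
    refine sum_le_sum fun a _ => ?_
    have hschmidt := norm_sq_star_dotProduct_prodv_le
      (fun a b ha hb => (hlam i).2 ⟨a, b, ha, hb, rfl⟩) (χ₁ a) (χ₂ a)
    calc m a * ‖star (ψ i) ⬝ᵥ u a‖ ^ 2 ≤ m a * (lam i * ∑ y, ‖u a y‖ ^ 2) :=
          mul_le_mul_of_nonneg_left hschmidt (hm a).le
      _ = lam i * (m a * ∑ y, ‖u a y‖ ^ 2) := by ring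

/-- Theorem 4: for states `ψ₀, …, ψ_{N-1}` in `ℂ^{d₁} ⊗ ℂ^{d₂}` with squared largest
Schmidt coefficients `λᵢ`, ordered so that `pᵢλᵢ` is nonincreasing, and `r` the index
with `κ := ∑_{i<r} λᵢ⁻¹ ≤ d₁d₂ < κ + λ_r⁻¹`, every rank-one separable measurement has
success probability at most `∑_{i<r} pᵢ + p_r λ_r (d₁d₂ − κ)`.
(Here `r` is zero-based, corresponding to the paper's `r-1`.) -/
theorem stmt10 (d₁ d₂ N : ℕ) (hd : d₁ ≤ d₂)
    (ψ : Fin N → (Fin d₁ × Fin d₂ → ℂ)) (hψ : ∀ i, star (ψ i) ⬝ᵥ ψ i = 1)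
    (p : Fin N → ℝ) (hp : ∀ i, 0 ≤ p i) (hpsum : ∑ i, p i = 1)
    (lam : Fin N → ℝ) (hlampos : ∀ i, 0 < lam i)
    (hlam : ∀ i, IsGreatest {x : ℝ | ∃ (a : Fin d₁ → ℂ) (b : Fin d₂ → ℂ),
        star a ⬝ᵥ a = 1 ∧ star b ⬝ᵥ b = 1 ∧
        x = ‖star (ψ i) ⬝ᵥ prodv a b‖^2} (lam i))
    (hord : ∀ i j : Fin N, i ≤ j → p j * lam j ≤ p i * lam i)
    (r : Fin N)
    (hκ : ∑ i ∈ Finset.univ.filter (fun i => i < r), (lam i)⁻¹ ≤ (d₁ : ℝ) * d₂)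
    (hκ' : (d₁ : ℝ) * d₂ <
        (∑ i ∈ Finset.univ.filter (fun i => i < r), (lam i)⁻¹) + (lam r)⁻¹)
    (A : ℕ) (m : Fin A → ℝ) (χ₁ : Fin A → Fin d₁ → ℂ) (χ₂ : Fin A → Fin d₂ → ℂ)
    (hm : ∀ a, 0 < m a)
    (hpovm : ∑ a, (m a : ℂ) • Matrix.vecMulVec (prodv (χ₁ a) (χ₂ a))
        (star (prodv (χ₁ a) (χ₂ a))) = 1) :
    ∑ a, m a * (Finset.univ.sup' (Finset.univ_nonempty_iff.mpr ⟨r⟩)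
        fun i => p i * ‖star (ψ i) ⬝ᵥ prodv (χ₁ a) (χ₂ a)‖^2) ≤
      (∑ i ∈ Finset.univ.filter (fun i => i < r), p i) +
        p r * lam r * ((d₁ : ℝ) * d₂ -
          ∑ i ∈ Finset.univ.filter (fun i => i < r), (lam i)⁻¹) :=
  stmt10_general d₁ d₂ N ψ hψ p hp lam hlampos hlam hord r A m χ₁ χ₂ hm hpovm
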